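/- arXiv:1807.02650 — 2 statements merged into one kernel-verified Lean document; each statement's English description precedes it below -/
import Mathlib

section
/- Let C be a category equipped with a class of cofibrations and a class of fibrations, let X be a cofibrant object admitting at least one weak cylinder object and Y a fibrant object admitting at least one weak path object (and assume X ⊔ X and Y × Y exist). Then the homotopy relation on the set of morphisms from X to Y is an equivalence relation (reflexive, symmetric and transitive). -/
open CategoryTheory CategoryTheory.Limits

universe w v u

namespace WMC

variable {C : Type u} [Category.{v} C]

/-- An object is cofibrant when the map from the initial object is a cofibration. -/
def Cofibrant [HasInitial C] (Cof : MorphismProperty C) (X : C) : Prop :=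
  Cof (initial.to X)

/-- An object is fibrant when the map to the terminal object is a fibration. -/
def Fibrant [HasTerminal C] (Fib : MorphismProperty C) (X : C) : Prop :=
  Fib (terminal.from X)

/-- The axioms for a class of cofibrations. -/
structure IsCofClass [HasInitial C] (Cof : MorphismProperty C) : Prop where
  initial_cofibrant : Cofibrant Cof (⊥_ C)
  iso_mem : ∀ {X Y : C} (f : X ⟶ Y), IsIso f → Cofibrant Cof X → Cof f
  comp_mem : ∀ {X Y Z : C} (f : X ⟶ Y) (g : Y ⟶ Z), Cof f → Cof g → Cof (f ≫ g)
  pushout_mem : ∀ {A B X : C} (i : A ⟶ B) (f : A ⟶ X), Cof i → Cofibrant Cof A →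
    Cofibrant Cof X →
    ∃ (P : C) (inl : X ⟶ P) (inr : B ⟶ P), IsPushout f i inl inr ∧ Cof inl

/-- The axioms for a class of fibrations (a class of cofibrations on `Cᵒᵖ`). -/
structure IsFibClass [HasTerminal C] (Fib : MorphismProperty C) : Prop where
  terminal_fibrant : Fibrant Fib (⊤_ C)
  iso_mem : ∀ {X Y : C} (f : X ⟶ Y), IsIso f → Fibrant Fib Y → Fib f
  comp_mem : ∀ {X Y Z : C} (f : X ⟶ Y) (g : Y ⟶ Z), Fib f → Fib g → Fib (f ≫ g)
  pullback_mem : ∀ {A B X : C} (p : B ⟶ A) (f : X ⟶ A), Fib p → Fibrant Fib A →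
    Fibrant Fib X →
    ∃ (P : C) (fst : P ⟶ X) (snd : P ⟶ B), IsPullback fst snd f p ∧ Fib fst

variable [HasInitial C] [HasTerminal C]

/-- Acyclic fibration: a fibration with the right lifting property against all
cofibrations between cofibrant objects. -/
def IsAcyclicFib (Cof Fib : MorphismProperty C) {X Y : C} (p : X ⟶ Y) : Prop :=
  Fib p ∧ ∀ {A B : C} (i : A ⟶ B), Cof i → Cofibrant Cof A → Cofibrant Cof B →
    HasLiftingProperty i p

/-- Acyclic cofibration: a cofibration with the left lifting property against all
fibrations between fibrant objects. -/
def IsAcyclicCof (Cof Fib : MorphismProperty C) {A B : C} (i : A ⟶ B) : Prop :=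
  Cof i ∧ ∀ {X Y : C} (p : X ⟶ Y), Fib p → Fibrant Fib X → Fibrant Fib Y →
    HasLiftingProperty i p

/-- A (relative) weak cylinder object for the cofibration `0 ⟶ X`, i.e. a weak cylinder
object for a cofibrant object `X`.  It includes the data of the coproduct `X ⊔ X`. -/
structure WeakCylinder (Cof Fib : MorphismProperty C) (X : C) where
  XX : C
  in₀ : X ⟶ XX
  in₁ : X ⟶ XX
  isCoprod : IsColimit (BinaryCofan.mk in₀ in₁)
  Cyl : C
  D : C
  ι : XX ⟶ Cyl
  ρ : Cyl ⟶ D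
  e : X ⟶ D
  ι_cof : Cof ι
  in₀_ι_acyclic : IsAcyclicCof Cof Fib (in₀ ≫ ι)
  e_acyclic : IsAcyclicCof Cof Fib e
  fac₀ : in₀ ≫ ι ≫ ρ = e
  fac₁ : in₁ ≫ ι ≫ ρ = e

/-- A (relative) weak path object for the fibration `Y ⟶ 1`, i.e. a weak path object
for a fibrant object `Y`.  It includes the data of the product `Y × Y`. -/
structure WeakPath (Cof Fib : MorphismProperty C) (Y : C) where
  YY : C
  pr₀ : YY ⟶ Y
  pr₁ : YY ⟶ Y
  isProd : IsLimit (BinaryFan.mk pr₀ pr₁)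
  Pth : C
  T : C
  π : Pth ⟶ YY
  σ : T ⟶ Pth
  e : T ⟶ Y
  π_fib : Fib π
  π_pr₀_acyclic : IsAcyclicFib Cof Fib (π ≫ pr₀)
  e_acyclic : IsAcyclicFib Cof Fib e
  fac₀ : σ ≫ π ≫ pr₀ = e
  fac₁ : σ ≫ π ≫ pr₁ = e

/-- `f` and `g` are homotopic relative to the weak cylinder object `W`:
the map `(f, g) : X ⊔ X ⟶ Y` factors through `ι : X ⊔ X ⟶ I X`. -/
def CylHomotopic {Cof Fib : MorphismProperty C} {X Y : C}
    (W : WeakCylinder Cof Fib X) (f g : X ⟶ Y) : Prop :=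
  ∃ h : W.Cyl ⟶ Y, W.in₀ ≫ W.ι ≫ h = f ∧ W.in₁ ≫ W.ι ≫ h = g

/-- `f` and `g` are homotopic relative to the weak path object `P`:
the map `(f, g) : X ⟶ Y × Y` factors through `π : P Y ⟶ Y × Y`. -/
def PathHomotopic {Cof Fib : MorphismProperty C} {X Y : C}
    (P : WeakPath Cof Fib Y) (f g : X ⟶ Y) : Prop :=
  ∃ h : X ⟶ P.Pth, h ≫ P.π ≫ P.pr₀ = f ∧ h ≫ P.π ≫ P.pr₁ = g

/-- `f` and `g` are homotopic: they are homotopic relative to some weak cylinder object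
for `X` or some weak path object for `Y`. -/
def Homotopic (Cof Fib : MorphismProperty C) {X Y : C} (f g : X ⟶ Y) : Prop :=
  (∃ W : WeakCylinder Cof Fib X, CylHomotopic W f g) ∨
  (∃ P : WeakPath Cof Fib Y, PathHomotopic P f g)

/- Every homotopy, relative to any weak cylinder or weak path object, can be turned into a
homotopy relative to one fixed weak path object `P`. This rests on two lifting arguments: a
`P`-homotopy becomes a cylinder homotopy by lifting the cofibration `X ⊔ X ⟶ IX` against the
acyclic fibration `PY ⟶ Y`, and a cylinder homotopy `a ~ b` glued to a `P`-homotopy `a ~ c`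
gives a `P`-homotopy `b ~ c` by lifting the acyclic cofibration `X ⟶ IX` against the
fibration `PY ⟶ Y × Y`, whose source and target are fibrant. With constant homotopies these two
moves make `P`-homotopy symmetric and transitive. -/

section

variable {𝒞 : Type*} [Category 𝒞]

lemma IsFibClass.fibrant_of_fib [HasTerminal 𝒞] {Fib : MorphismProperty 𝒞}
    (hFib : IsFibClass Fib) {X Y : 𝒞} {p : X ⟶ Y} (hp : Fib p) (hY : Fibrant Fib Y) :
    Fibrant Fib X := by
  rw [Fibrant, ← terminal.comp_from p]
  exact hFib.comp_mem _ _ hp hY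

lemma IsCofClass.cofibrant_of_cof [HasInitial 𝒞] {Cof : MorphismProperty 𝒞}
    (hCof : IsCofClass Cof) {A B : 𝒞} {i : A ⟶ B} (hi : Cof i) (hA : Cofibrant Cof A) :
    Cofibrant Cof B := by
  rw [Cofibrant, ← initial.to_comp i]
  exact hCof.comp_mem _ _ hA hi

lemma IsFibClass.fib_of_isPullback [HasTerminal 𝒞] {Fib : MorphismProperty 𝒞}
    (hFib : IsFibClass Fib) {P A B X : 𝒞} {p : B ⟶ A} {f : X ⟶ A} {fst : P ⟶ X}
    {snd : P ⟶ B} (h : IsPullback fst snd f p) (hp : Fib p) (hA : Fibrant Fib A)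
    (hX : Fibrant Fib X) : Fib fst := by
  obtain ⟨_, fst', _, h', hfst'⟩ := hFib.pullback_mem p f hp hA hX
  rw [← h.isoIsPullback_hom_fst _ _ h']
  exact hFib.comp_mem _ _
    (hFib.iso_mem _ inferInstance (hFib.fibrant_of_fib hfst' hX)) hfst'

lemma IsCofClass.cof_of_isPushout [HasInitial 𝒞] {Cof : MorphismProperty 𝒞}
    (hCof : IsCofClass Cof) {P A B X : 𝒞} {i : A ⟶ B} {f : A ⟶ X} {inl : X ⟶ P}
    {inr : B ⟶ P} (h : IsPushout f i inl inr) (hi : Cof i) (hA : Cofibrant Cof A)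
    (hX : Cofibrant Cof X) : Cof inl := by
  obtain ⟨_, inl', _, h', hinl'⟩ := hCof.pushout_mem i f hi hA hX
  rw [← h'.inl_isoIsPushout_hom _ _ h]
  exact hCof.comp_mem _ _ hinl'
    (hCof.iso_mem _ inferInstance (hCof.cofibrant_of_cof hinl' hX))

lemma IsAcyclicCof.exists_extension [HasTerminal 𝒞] {Cof Fib : MorphismProperty 𝒞}
    (hFib : IsFibClass Fib) {A B Y : 𝒞} {i : A ⟶ B} (hi : IsAcyclicCof Cof Fib i)
    (hY : Fibrant Fib Y) (f : A ⟶ Y) : ∃ l : B ⟶ Y, i ≫ l = f := by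
  have := hi.2 (terminal.from Y) hY hY hFib.terminal_fibrant
  have sq : CommSq f i (terminal.from Y) (terminal.from B) := ⟨terminal.hom_ext _ _⟩
  exact ⟨sq.lift, sq.fac_left⟩

lemma IsAcyclicFib.exists_lift [HasInitial 𝒞] {Cof Fib : MorphismProperty 𝒞}
    (hCof : IsCofClass Cof) {T X Y : 𝒞} {e : T ⟶ Y} (he : IsAcyclicFib Cof Fib e)
    (hX : Cofibrant Cof X) (f : X ⟶ Y) : ∃ s : X ⟶ T, s ≫ e = f := by
  have := he.2 (initial.to X) hX hCof.initial_cofibrant hX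
  have sq : CommSq (initial.to T) (initial.to X) e f := ⟨initial.hom_ext _ _⟩
  exact ⟨sq.lift, sq.fac_right⟩

lemma PathHomotopic.refl [HasInitial 𝒞] {Cof Fib : MorphismProperty 𝒞}
    (hCof : IsCofClass Cof) {X Y : 𝒞} (hX : Cofibrant Cof X) (P : WeakPath Cof Fib Y)
    (f : X ⟶ Y) : PathHomotopic P f f := by
  obtain ⟨s, hs⟩ := P.e_acyclic.exists_lift hCof hX f
  exact ⟨s ≫ P.σ, by rw [Category.assoc, P.fac₀, hs], by rw [Category.assoc, P.fac₁, hs]⟩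

end

section

variable {Cof Fib : MorphismProperty C} {X Y : C}

lemma WeakPath.fibrant_YY (hFib : IsFibClass Fib) (hY : Fibrant Fib Y)
    (P : WeakPath Cof Fib Y) : Fibrant Fib P.YY :=
  have hpb : IsPullback P.pr₀ P.pr₁ (terminal.from Y) (terminal.from Y) :=
    IsPullback.of_is_product' P.isProd terminalIsTerminal
  hFib.fibrant_of_fib (hFib.fib_of_isPullback hpb hY hFib.terminal_fibrant hY) hY

lemma WeakPath.fibrant_Pth (hFib : IsFibClass Fib) (hY : Fibrant Fib Y)
    (P : WeakPath Cof Fib Y) : Fibrant Fib P.Pth :=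
  hFib.fibrant_of_fib P.π_pr₀_acyclic.1 hY

lemma WeakCylinder.cofibrant_XX (hCof : IsCofClass Cof) (hX : Cofibrant Cof X)
    (W : WeakCylinder Cof Fib X) : Cofibrant Cof W.XX :=
  have hpo : IsPushout (initial.to X) (initial.to X) W.in₀ W.in₁ :=
    IsPushout.of_is_coproduct' W.isCoprod initialIsInitial
  hCof.cofibrant_of_cof (hCof.cof_of_isPushout hpo hX hCof.initial_cofibrant hX) hX

lemma WeakCylinder.cofibrant_Cyl (hCof : IsCofClass Cof) (hX : Cofibrant Cof X)
    (W : WeakCylinder Cof Fib X) : Cofibrant Cof W.Cyl :=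
  hCof.cofibrant_of_cof W.ι_cof (W.cofibrant_XX hCof hX)

/- Lift `in₀ ≫ ι` against `π`, with the path `a ~ c` on top and the pair of `h` and the
constant homotopy at `c` below; the lift restricted to the other end is a path `b ~ c`. -/
lemma CylHomotopic.symm_trans_pathHomotopic (hFib : IsFibClass Fib) (hY : Fibrant Fib Y)
    {W : WeakCylinder Cof Fib X} {P : WeakPath Cof Fib Y} {a b c : X ⟶ Y}
    (hab : CylHomotopic W a b) (hac : PathHomotopic P a c) : PathHomotopic P b c := by
  obtain ⟨h, h₀, h₁⟩ := hab
  obtain ⟨H, H₀, H₁⟩ := hac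
  obtain ⟨c', hc'⟩ := W.e_acyclic.exists_extension hFib hY c
  obtain ⟨K, hK₀, hK₁⟩ : ∃ K : W.Cyl ⟶ P.YY, K ≫ P.pr₀ = h ∧ K ≫ P.pr₁ = W.ρ ≫ c' :=
    ⟨_, (BinaryFan.IsLimit.lift' P.isProd h (W.ρ ≫ c')).2⟩
  have := W.in₀_ι_acyclic.2 P.π P.π_fib (P.fibrant_Pth hFib hY) (P.fibrant_YY hFib hY)
  have sq : CommSq H (W.in₀ ≫ W.ι) P.π K := ⟨BinaryFan.IsLimit.hom_ext P.isProd
    (by simp [hK₀, h₀, H₀]) (by simp [hK₁, H₁, reassoc_of% W.fac₀, hc'])⟩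
  refine ⟨W.in₁ ≫ W.ι ≫ sq.lift, ?_, ?_⟩
  · simp [reassoc_of% sq.fac_right, hK₀, h₁]
  · simp [reassoc_of% sq.fac_right, hK₁, reassoc_of% W.fac₁, hc']

/- Lift `ι` against `π ≫ pr₀`, with the constant path at `f` on the first end and the path
`f ~ g` on the second; projecting the lift by `pr₁` gives the homotopy. -/
lemma PathHomotopic.cylHomotopic (hCof : IsCofClass Cof) (hFib : IsFibClass Fib)
    (hX : Cofibrant Cof X) (hY : Fibrant Fib Y) (W : WeakCylinder Cof Fib X)
    {P : WeakPath Cof Fib Y} {f g : X ⟶ Y} (hfg : PathHomotopic P f g) :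
    CylHomotopic W f g := by
  obtain ⟨H, H₀, H₁⟩ := hfg
  obtain ⟨s, hs⟩ := P.e_acyclic.exists_lift hCof hX f
  obtain ⟨f', hf'⟩ := W.e_acyclic.exists_extension hFib hY f
  obtain ⟨u, hu₀, hu₁⟩ : ∃ u : W.XX ⟶ P.Pth, W.in₀ ≫ u = s ≫ P.σ ∧ W.in₁ ≫ u = H :=
    ⟨_, (BinaryCofan.IsColimit.desc' W.isCoprod (s ≫ P.σ) H).2⟩
  have := P.π_pr₀_acyclic.2 W.ι W.ι_cof (W.cofibrant_XX hCof hX) (W.cofibrant_Cyl hCof hX)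
  have e₀ : W.in₀ ≫ u ≫ P.π ≫ P.pr₀ = W.in₀ ≫ W.ι ≫ W.ρ ≫ f' := by
    rw [reassoc_of% hu₀, P.fac₀, hs, reassoc_of% W.fac₀, hf']
  have e₁ : W.in₁ ≫ u ≫ P.π ≫ P.pr₀ = W.in₁ ≫ W.ι ≫ W.ρ ≫ f' := by
    rw [reassoc_of% hu₁, H₀, reassoc_of% W.fac₁, hf']
  have sq : CommSq u W.ι (P.π ≫ P.pr₀) (W.ρ ≫ f') :=
    ⟨BinaryCofan.IsColimit.hom_ext W.isCoprod e₀ e₁⟩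
  refine ⟨sq.lift ≫ P.π ≫ P.pr₁, ?_, ?_⟩
  · simp [reassoc_of% sq.fac_left, reassoc_of% hu₀, P.fac₁, hs]
  · simp [reassoc_of% sq.fac_left, reassoc_of% hu₁, H₁]

lemma PathHomotopic.symm (hCof : IsCofClass Cof) (hFib : IsFibClass Fib)
    (hX : Cofibrant Cof X) (hY : Fibrant Fib Y) (W : WeakCylinder Cof Fib X)
    {P : WeakPath Cof Fib Y} {f g : X ⟶ Y} (hfg : PathHomotopic P f g) :
    PathHomotopic P g f :=
  (hfg.cylHomotopic hCof hFib hX hY W).symm_trans_pathHomotopic hFib hY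
    (PathHomotopic.refl hCof hX P f)

lemma PathHomotopic.trans (hCof : IsCofClass Cof) (hFib : IsFibClass Fib)
    (hX : Cofibrant Cof X) (hY : Fibrant Fib Y) (W : WeakCylinder Cof Fib X)
    {P : WeakPath Cof Fib Y} {f g k : X ⟶ Y} (hfg : PathHomotopic P f g)
    (hgk : PathHomotopic P g k) : PathHomotopic P f k :=
  (PathHomotopic.cylHomotopic hCof hFib hX hY W
    (hfg.symm hCof hFib hX hY W)).symm_trans_pathHomotopic hFib hY hgk

lemma CylHomotopic.pathHomotopic (hCof : IsCofClass Cof) (hFib : IsFibClass Fib)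
    (hX : Cofibrant Cof X) (hY : Fibrant Fib Y) {W : WeakCylinder Cof Fib X}
    (P : WeakPath Cof Fib Y) {f g : X ⟶ Y} (hfg : CylHomotopic W f g) :
    PathHomotopic P f g :=
  (hfg.symm_trans_pathHomotopic hFib hY (PathHomotopic.refl hCof hX P f)).symm hCof hFib hX hY W

lemma homotopic_iff_pathHomotopic (hCof : IsCofClass Cof) (hFib : IsFibClass Fib)
    (hX : Cofibrant Cof X) (hY : Fibrant Fib Y) (W : WeakCylinder Cof Fib X)
    (P : WeakPath Cof Fib Y) {f g : X ⟶ Y} :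
    Homotopic Cof Fib f g ↔ PathHomotopic P f g := by
  refine ⟨?_, fun h ↦ Or.inr ⟨P, h⟩⟩
  rintro (⟨_, hfg⟩ | ⟨_, hfg⟩)
  · exact hfg.pathHomotopic hCof hFib hX hY P
  · exact (hfg.cylHomotopic hCof hFib hX hY W).pathHomotopic hCof hFib hX hY P

end

/-- for `X` cofibrant with at least one weak cylinder object and `Y` fibrant
with at least one weak path object, the homotopy relation on maps `X ⟶ Y` is an
equivalence relation. -/
theorem statement2 (Cof Fib : MorphismProperty C)
    (hCof : IsCofClass Cof) (hFib : IsFibClass Fib)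
    {X Y : C} (hX : Cofibrant Cof X) (hY : Fibrant Fib Y)
    (hW : Nonempty (WeakCylinder Cof Fib X)) (hP : Nonempty (WeakPath Cof Fib Y)) :
    _root_.Equivalence (fun f g : X ⟶ Y => Homotopic Cof Fib f g) := by
  obtain ⟨W⟩ := hW
  obtain ⟨P⟩ := hP
  simp only [homotopic_iff_pathHomotopic hCof hFib hX hY W P]
  exact ⟨PathHomotopic.refl hCof hX P, (·.symm hCof hFib hX hY W),
    (·.trans hCof hFib hX hY W ·)⟩

end WMC
end

section
/- Let C be a category equipped with a class of cofibrations and a class of fibrations satisfying the factorization axiom (every morphism from a cofibrant object to a fibrant object factors both as a cofibration followed by an acyclic fibration and as an acyclic cofibration followed by a fibration) and the cylinder axiom (every cofibration from a cofibrant object to a fibrant object admits a relative strong cylinder object). Then the following conditions are equivalent: (i) C is a weak model category, i.e. every fibration from a cofibrant object to a fibrant object admits a relative strong path object; (ii) for composable cofibrations i : A → B and j : B → C between bifibrant objects, if i and j ∘ i are acyclic cofibrations then j is an acyclic cofibration; (iii) there is a class J of acyclic cofibrations such that every morphism from a cofibrant object to a fibrant object factors as a member of J followed by a fibration, and condition (ii)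 holds whenever moreover i belongs to J. -/
/-! (i) ⇒ (ii): factor `j = u ≫ p` with `u` an acyclic cofibration and `p` a fibration, and
lift a section `d` of `p` with `i ≫ j ≫ d = i ≫ u`. The path object of `p` gives a fiberwise
homotopy from `j ≫ d` to `u` relative to `A`; extending it along `j` yields a section `e` of `p`
with `j ≫ e = u`, which exhibits `j` as a retract of `u`.

(iii) ⇒ (i): factor the relative diagonal of `q` as `σ ≫ π` with `σ ∈ J`; it remains to see
that `π ≫ pr₀` is acyclic. Factor it as `c ≫ r` with `r` an acyclic fibration. The cylinder axiom
makes the section `σ ≫ c` of `r` an acyclic cofibration, hence so is `c` by cancellation, and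
then `π ≫ pr₀` is a retract of `r`. -/

open CategoryTheory CategoryTheory.Limits

universe w v u

namespace WMC

variable {C : Type u} [Category.{v} C]

variable [HasInitial C] [HasTerminal C]

/-- A relative strong cylinder object for a cofibration `i : A ⟶ B`: a factorization
`B ⊔_A B ⟶ I_A B ⟶ B` of the codiagonal, with the first map a cofibration whose
precomposition with the first coprojection is an acyclic cofibration. -/
structure RelStrongCylinder (Cof Fib : MorphismProperty C) {A B : C} (i : A ⟶ B) where
  BB : C
  in₀ : B ⟶ BB
  in₁ : B ⟶ BB
  isPushout : IsPushout i i in₀ in₁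
  Cyl : C
  ι : BB ⟶ Cyl
  ρ : Cyl ⟶ B
  ι_cof : Cof ι
  in₀_ι_acyclic : IsAcyclicCof Cof Fib (in₀ ≫ ι)
  fac₀ : in₀ ≫ ι ≫ ρ = 𝟙 B
  fac₁ : in₁ ≫ ι ≫ ρ = 𝟙 B

/-- A relative strong path object for a fibration `q : Y ⟶ X`: a factorization
`Y ⟶ P_X Y ⟶ Y ×_X Y` of the relative diagonal, with the second map a fibration whose
postcomposition with the first projection is an acyclic fibration. -/
structure RelStrongPath (Cof Fib : MorphismProperty C) {X Y : C} (q : Y ⟶ X) where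
  YY : C
  pr₀ : YY ⟶ Y
  pr₁ : YY ⟶ Y
  isPullback : IsPullback pr₀ pr₁ q q
  Pth : C
  π : Pth ⟶ YY
  σ : Y ⟶ Pth
  π_fib : Fib π
  π_pr₀_acyclic : IsAcyclicFib Cof Fib (π ≫ pr₀)
  fac₀ : σ ≫ π ≫ pr₀ = 𝟙 Y
  fac₁ : σ ≫ π ≫ pr₁ = 𝟙 Y

/-- A weak model category: a class of cofibrations and a class of fibrations satisfying
the factorization axiom, the cylinder axiom and the path object axiom. -/
structure IsWeakModel (Cof Fib : MorphismProperty C) : Prop where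
  cofClass : IsCofClass Cof
  fibClass : IsFibClass Fib
  factor_cof_afib : ∀ {X Y : C} (f : X ⟶ Y), Cofibrant Cof X → Fibrant Fib Y →
    ∃ (Z : C) (i : X ⟶ Z) (q : Z ⟶ Y), Cof i ∧ IsAcyclicFib Cof Fib q ∧ i ≫ q = f
  factor_acof_fib : ∀ {X Y : C} (f : X ⟶ Y), Cofibrant Cof X → Fibrant Fib Y →
    ∃ (Z : C) (i : X ⟶ Z) (q : Z ⟶ Y), IsAcyclicCof Cof Fib i ∧ Fib q ∧ i ≫ q = f
  cylinder : ∀ {A B : C} (i : A ⟶ B), Cof i → Cofibrant Cof A → Fibrant Fib B →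
    Nonempty (RelStrongCylinder Cof Fib i)
  pathObj : ∀ {X Y : C} (q : Y ⟶ X), Fib q → Cofibrant Cof Y → Fibrant Fib X →
    Nonempty (RelStrongPath Cof Fib q)

end WMC

namespace WMC

variable {C : Type u} [Category.{v} C]

section

variable {Cof Fib : MorphismProperty C}

lemma Cofibrant.of_cof [HasInitial C] (hCof : IsCofClass Cof) {X Y : C} {f : X ⟶ Y}
    (hf : Cof f) (hX : Cofibrant Cof X) : Cofibrant Cof Y := by
  rw [Cofibrant, Subsingleton.elim (initial.to Y) (initial.to X ≫ f)]
  exact hCof.comp_mem _ _ hX hf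

lemma Fibrant.of_fib [HasTerminal C] (hFib : IsFibClass Fib) {X Y : C} {f : X ⟶ Y}
    (hf : Fib f) (hY : Fibrant Fib Y) : Fibrant Fib X := by
  rw [Fibrant, Subsingleton.elim (terminal.from X) (f ≫ terminal.from Y)]
  exact hFib.comp_mem _ _ hf hY

lemma Cofibrant.of_isPushout [HasInitial C] (hCof : IsCofClass Cof) {A X B P : C}
    {f : A ⟶ X} {i : A ⟶ B} {inl : X ⟶ P} {inr : B ⟶ P} (h : IsPushout f i inl inr)
    (hi : Cof i) (hA : Cofibrant Cof A) (hX : Cofibrant Cof X) : Cofibrant Cof P := by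
  obtain ⟨P₀, inl₀, inr₀, h₀, hinl₀⟩ := hCof.pushout_mem i f hi hA hX
  have hP₀ : Cofibrant Cof P₀ := Cofibrant.of_cof hCof hinl₀ hX
  exact Cofibrant.of_cof hCof (hCof.iso_mem (h₀.isoIsPushout _ _ h).hom inferInstance hP₀) hP₀

lemma Fibrant.of_isPullback [HasTerminal C] (hFib : IsFibClass Fib) {A B X P : C}
    {p : B ⟶ A} {f : X ⟶ A} {fst : P ⟶ X} {snd : P ⟶ B} (h : IsPullback fst snd f p)
    (hp : Fib p) (hA : Fibrant Fib A) (hX : Fibrant Fib X) : Fibrant Fib P := by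
  obtain ⟨P₀, fst₀, snd₀, h₀, hfst₀⟩ := hFib.pullback_mem p f hp hA hX
  have hP₀ : Fibrant Fib P₀ := Fibrant.of_fib hFib hfst₀ hX
  exact Fibrant.of_fib hFib (hFib.iso_mem (h.isoIsPullback _ _ h₀).hom inferInstance hP₀) hP₀

lemma IsAcyclicCof.of_retractArrow [HasTerminal C] {A B A' B' : C} {j : A ⟶ B}
    {u : A' ⟶ B'} (h : RetractArrow j u) (hj : Cof j) (hu : IsAcyclicCof Cof Fib u) :
    IsAcyclicCof Cof Fib j :=
  ⟨hj, fun p hp hX hY ↦ have := hu.2 p hp hX hY; h.leftLiftingProperty p⟩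

lemma IsAcyclicFib.of_retractArrow [HasInitial C] {X Y X' Y' : C} {p : X ⟶ Y}
    {r : X' ⟶ Y'} (h : RetractArrow p r) (hp : Fib p) (hr : IsAcyclicFib Cof Fib r) :
    IsAcyclicFib Cof Fib p :=
  ⟨hp, fun i hi hA hB ↦ have := hr.2 i hi hA hB; h.rightLiftingProperty i⟩

namespace RelStrongCylinder

variable [HasTerminal C] {A B : C} {i : A ⟶ B} (cyl : RelStrongCylinder Cof Fib i)

lemma exists_homotopy_of_retraction [HasInitial C] (hCof : IsCofClass Cof) (hi : Cof i)
    (hA : Cofibrant Cof A) {r : B ⟶ A} (hir : i ≫ r = 𝟙 A) (hr : IsAcyclicFib Cof Fib r) :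
    ∃ H : cyl.Cyl ⟶ B, cyl.in₀ ≫ cyl.ι ≫ H = r ≫ i ∧ cyl.in₁ ≫ cyl.ι ≫ H = 𝟙 B := by
  have hBB := Cofibrant.of_isPushout hCof cyl.isPushout hi hA (Cofibrant.of_cof hCof hi hA)
  have := hr.2 cyl.ι cyl.ι_cof hBB (Cofibrant.of_cof hCof cyl.ι_cof hBB)
  let c := cyl.isPushout.desc (r ≫ i) (𝟙 B) (by simp [reassoc_of% hir])
  have sq : CommSq c cyl.ι r (cyl.ρ ≫ r) := ⟨cyl.isPushout.hom_ext
    (by simp [c, reassoc_of% cyl.fac₀, hir]) (by simp [c, reassoc_of% cyl.fac₁])⟩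
  exact ⟨sq.lift, by simp [c], by simp [c]⟩

-- Lifts against `in₀ ≫ ι` are transported along the homotopy `H` to lifts against `i`.
lemma isAcyclicCof_of_homotopy (hi : Cof i) {r : B ⟶ A} (hir : i ≫ r = 𝟙 A)
    {H : cyl.Cyl ⟶ B} (hH₀ : cyl.in₀ ≫ cyl.ι ≫ H = r ≫ i)
    (hH₁ : cyl.in₁ ≫ cyl.ι ≫ H = 𝟙 B) : IsAcyclicCof Cof Fib i := by
  refine ⟨hi, fun g hg hU hV ↦ ⟨fun {u v} sq ↦ ?_⟩⟩
  have := cyl.in₀_ι_acyclic.2 g hg hU hV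
  have sq' : CommSq (r ≫ u) (cyl.in₀ ≫ cyl.ι) g (H ≫ v) :=
    ⟨by simp [reassoc_of% hH₀, sq.w]⟩
  refine ⟨⟨cyl.in₁ ≫ cyl.ι ≫ sq'.lift, ?_, ?_⟩⟩
  · have h₀ := sq'.fac_left
    simp only [Category.assoc] at h₀
    rw [← cyl.isPushout.w_assoc, h₀, reassoc_of% hir]
  · simp [sq'.fac_right, reassoc_of% hH₁]

end RelStrongCylinder

namespace RelStrongPath

variable [HasInitial C] {X Y : C} {q : Y ⟶ X} (P : RelStrongPath Cof Fib q)

lemma fibrant_YY [HasTerminal C] (hFib : IsFibClass Fib) (hq : Fib q) (hX : Fibrant Fib X) :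
    Fibrant Fib P.YY :=
  Fibrant.of_isPullback hFib P.isPullback hq hX (Fibrant.of_fib hFib hq hX)

lemma fibrant_Pth [HasTerminal C] (hFib : IsFibClass Fib) (hq : Fib q) (hX : Fibrant Fib X) :
    Fibrant Fib P.Pth :=
  Fibrant.of_fib hFib P.π_fib (P.fibrant_YY hFib hq hX)

lemma exists_homotopy [HasTerminal C] (hFib : IsFibClass Fib) (hq : Fib q) (hX : Fibrant Fib X)
    {A B : C} {i : A ⟶ B} (hi : IsAcyclicCof Cof Fib i) {f g : B ⟶ Y} (hfg : i ≫ f = i ≫ g)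
    (hfgq : f ≫ q = g ≫ q) : ∃ K : B ⟶ P.Pth, K ≫ P.π ≫ P.pr₀ = f ∧ K ≫ P.π ≫ P.pr₁ = g := by
  have := hi.2 P.π P.π_fib (P.fibrant_Pth hFib hq hX) (P.fibrant_YY hFib hq hX)
  have sq : CommSq (i ≫ f ≫ P.σ) i P.π (P.isPullback.lift f g hfgq) :=
    ⟨P.isPullback.hom_ext (by simp [P.fac₀]) (by simp [P.fac₁, hfg])⟩
  exact ⟨sq.lift, by simp [reassoc_of% sq.fac_right], by simp [reassoc_of% sq.fac_right]⟩

lemma exists_extension {B D : C} {j : B ⟶ D} (hj : Cof j) (hB : Cofibrant Cof B)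
    (hD : Cofibrant Cof D) {K : B ⟶ P.Pth} {d : D ⟶ Y} (hK : K ≫ P.π ≫ P.pr₀ = j ≫ d) :
    ∃ e : D ⟶ Y, j ≫ e = K ≫ P.π ≫ P.pr₁ ∧ e ≫ q = d ≫ q := by
  have := P.π_pr₀_acyclic.2 j hj hB hD
  have sq : CommSq K j (P.π ≫ P.pr₀) d := ⟨hK⟩
  refine ⟨sq.lift ≫ P.π ≫ P.pr₁, by simp [reassoc_of% sq.fac_left], ?_⟩
  simp [← P.isPullback.w, reassoc_of% sq.fac_right]

end RelStrongPath

variable [HasInitial C] [HasTerminal C]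

lemma isAcyclicCof_of_comp_of_relStrongPath (hFib : IsFibClass Fib) {A B D Z : C}
    {i : A ⟶ B} {j : B ⟶ D} {u : B ⟶ Z} {p : Z ⟶ D} (hi : IsAcyclicCof Cof Fib i)
    (hij : IsAcyclicCof Cof Fib (i ≫ j)) (hj : Cof j) (hu : IsAcyclicCof Cof Fib u)
    (hp : Fib p) (hup : u ≫ p = j) (P : RelStrongPath Cof Fib p) (hB : Cofibrant Cof B)
    (hD : Cofibrant Cof D) (hDf : Fibrant Fib D) : IsAcyclicCof Cof Fib j := by
  have := hij.2 p hp (Fibrant.of_fib hFib hp hDf) hDf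
  have sq : CommSq (i ≫ u) (i ≫ j) p (𝟙 D) := ⟨by simp [hup]⟩
  obtain ⟨K, hK₀, hK₁⟩ := P.exists_homotopy hFib hp hDf hi (f := j ≫ sq.lift) (g := u)
    (by rw [← Category.assoc, sq.fac_left]) (by simp [sq.fac_right, hup])
  obtain ⟨e, hje, he⟩ := P.exists_extension hj hB hD hK₀
  exact IsAcyclicCof.of_retractArrow
    { i := Arrow.homMk (𝟙 B) e (by simp [hje, hK₁])
      r := Arrow.homMk (𝟙 B) p (by simp [hup])
      retract := by ext <;> simp [he, sq.fac_right] } hj hu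

lemma isAcyclicFib_of_section (hCof : IsCofClass Cof) (hFib : IsFibClass Fib)
    (hfac₁ : ∀ {X Y : C} (f : X ⟶ Y), Cofibrant Cof X → Fibrant Fib Y →
      ∃ (Z : C) (i : X ⟶ Z) (q : Z ⟶ Y), Cof i ∧ IsAcyclicFib Cof Fib q ∧ i ≫ q = f)
    (hcyl : ∀ {A B : C} (i : A ⟶ B), Cof i → Cofibrant Cof A → Fibrant Fib B →
      Nonempty (RelStrongCylinder Cof Fib i))
    {Y P : C} {σ : Y ⟶ P} {p : P ⟶ Y} (hσp : σ ≫ p = 𝟙 Y) (hσ : Cof σ) (hp : Fib p)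
    (hY : Cofibrant Cof Y) (hYf : Fibrant Fib Y)
    (hcancel : ∀ {D : C} (c : P ⟶ D), Cof c → Cofibrant Cof D → Fibrant Fib D →
      IsAcyclicCof Cof Fib (σ ≫ c) → IsAcyclicCof Cof Fib c) :
    IsAcyclicFib Cof Fib p := by
  have hP := Cofibrant.of_cof hCof hσ hY
  obtain ⟨F, c, r, hc, hr, hcr⟩ := hfac₁ p hP hYf
  have hσc := hCof.comp_mem _ _ hσ hc
  have hσcr : (σ ≫ c) ≫ r = 𝟙 Y := by simp [hcr, hσp]
  obtain ⟨cyl⟩ := hcyl (σ ≫ c) hσc hY (Fibrant.of_fib hFib hr.1 hYf)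
  obtain ⟨H, hH₀, hH₁⟩ := cyl.exists_homotopy_of_retraction hCof hσc hY hσcr hr
  have hcAC := hcancel c hc (Cofibrant.of_cof hCof hc hP) (Fibrant.of_fib hFib hr.1 hYf)
    (cyl.isAcyclicCof_of_homotopy hσc hσcr hH₀ hH₁)
  have := hcAC.2 p hp (Fibrant.of_fib hFib hp hYf) hYf
  exact IsAcyclicFib.of_retractArrow (RetractArrow.ofRightLiftingProperty hcr) hp hr

end

variable [HasInitial C] [HasTerminal C]

/-- equivalent characterizations of the path object axiom, in the presence
of the factorization axiom and the cylinder axiom. -/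
theorem statement9 (Cof Fib : MorphismProperty C)
    (hCof : IsCofClass Cof) (hFib : IsFibClass Fib)
    (hfac₁ : ∀ {X Y : C} (f : X ⟶ Y), Cofibrant Cof X → Fibrant Fib Y →
      ∃ (Z : C) (i : X ⟶ Z) (q : Z ⟶ Y), Cof i ∧ IsAcyclicFib Cof Fib q ∧ i ≫ q = f)
    (hfac₂ : ∀ {X Y : C} (f : X ⟶ Y), Cofibrant Cof X → Fibrant Fib Y →
      ∃ (Z : C) (i : X ⟶ Z) (q : Z ⟶ Y), IsAcyclicCof Cof Fib i ∧ Fib q ∧ i ≫ q = f)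
    (hcyl : ∀ {A B : C} (i : A ⟶ B), Cof i → Cofibrant Cof A → Fibrant Fib B →
      Nonempty (RelStrongCylinder Cof Fib i)) :
    List.TFAE [
      -- (i) C is a weak model category: any fibration from a cofibrant object to a
      -- fibrant object admits a relative strong path object
      (∀ {X Y : C} (q : Y ⟶ X), Fib q → Cofibrant Cof Y → Fibrant Fib X →
        Nonempty (RelStrongPath Cof Fib q)),
      -- (ii) right cancellation for acyclic cofibrations between bifibrant objects
      (∀ {A B D : C} (i : A ⟶ B) (j : B ⟶ D), Cof j →
        Cofibrant Cof A → Fibrant Fib A → Cofibrant Cof B → Fibrant Fib B →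
        Cofibrant Cof D → Fibrant Fib D →
        IsAcyclicCof Cof Fib i → IsAcyclicCof Cof Fib (i ≫ j) → IsAcyclicCof Cof Fib j),
      -- (iii) the same restricted to a class J of acyclic cofibrations through which
      -- every map from a cofibrant object to a fibrant object factors before a fibration
      (∃ J : MorphismProperty C,
        (∀ {X Y : C} (j : X ⟶ Y), J j → IsAcyclicCof Cof Fib j) ∧
        (∀ {X Y : C} (f : X ⟶ Y), Cofibrant Cof X → Fibrant Fib Y →
          ∃ (Z : C) (i : X ⟶ Z) (q : Z ⟶ Y), J i ∧ Fib q ∧ i ≫ q = f) ∧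
        (∀ {A B D : C} (i : A ⟶ B) (j : B ⟶ D), Cof j →
          Cofibrant Cof A → Fibrant Fib A → Cofibrant Cof B → Fibrant Fib B →
          Cofibrant Cof D → Fibrant Fib D →
          J i → IsAcyclicCof Cof Fib (i ≫ j) → IsAcyclicCof Cof Fib j))
    ] := by
  tfae_have 1 → 2 := by
    intro hpath A B D i j hj _ _ hB _ hD hDf hi hij
    obtain ⟨Z, u, p, hu, hp, hup⟩ := hfac₂ j hB hDf
    obtain ⟨P⟩ := hpath p hp (Cofibrant.of_cof hCof hu.1 hB) hDf
    exact isAcyclicCof_of_comp_of_relStrongPath hFib hi hij hj hu hp hup P hB hD hDf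
  tfae_have 2 → 3 := fun hcancel ↦
    ⟨fun _ _ f ↦ IsAcyclicCof Cof Fib f, fun _ hj ↦ hj, hfac₂, hcancel⟩
  tfae_have 3 → 1 := by
    rintro ⟨J, hJ, hJfac, hJcancel⟩ X Y q hq hY hX
    have hYf := Fibrant.of_fib hFib hq hX
    obtain ⟨YY, pr₀, pr₁, hPB, hpr₀⟩ := hFib.pullback_mem q q hq hX hYf
    obtain ⟨P, σ, π, hσ, hπ, hσπ⟩ :=
      hJfac (hPB.lift (𝟙 Y) (𝟙 Y) rfl) hY (Fibrant.of_fib hFib hpr₀ hYf)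
    have hσπ₀ : σ ≫ π ≫ pr₀ = 𝟙 Y := by simp [reassoc_of% hσπ]
    have hP := Cofibrant.of_cof hCof (hJ σ hσ).1 hY
    have hPf := Fibrant.of_fib hFib hπ (Fibrant.of_fib hFib hpr₀ hYf)
    have hπpr₀ := isAcyclicFib_of_section hCof hFib hfac₁ hcyl hσπ₀ (hJ σ hσ).1
      (hFib.comp_mem _ _ hπ hpr₀) hY hYf
      fun c hc hD hDf ↦ hJcancel σ c hc hY hYf hP hPf hD hDf hσ
    exact ⟨⟨YY, pr₀, pr₁, hPB, P, π, σ, hπ, hπpr₀, hσπ₀, by simp [reassoc_of% hσπ]⟩⟩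
  tfae_finish

end WMC
end
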